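/- arXiv:1802.08412 — 2 statements merged into one kernel-verified Lean document; each statement's English description precedes it below -/
import Mathlib

section
/- From an integral variational inequality to a pointwise maximum condition: Let H be a separable real Hilbert space with inner product ⟨·,·⟩ and norm ‖·‖, let T > 0 and M > 0. Let f : (0,T) → H be Bochner integrable and let u* : (0,T) → H be admissible with bound M. Suppose that for every u : (0,T) → H admissible with bound M one has ∫₀ᵀ ⟨f(t), u(t) − u*(t)⟩ dt ≤ 0. Then for almost every t ∈ (0,T), ⟨f(t), u*(t)⟩ = max{⟨f(t), v⟩ : v ∈ H, ‖v‖ ≤ M} = M‖f(t)‖. -/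
open MeasureTheory
open scoped RealInnerProductSpace

/-- From an integral variational inequality to a pointwise maximum condition:
in a separable real Hilbert space `H`, if `f` is Bochner integrable on `(0,T)`,
`u*` is admissible with bound `M` (strongly measurable and `‖u* t‖ ≤ M` a.e.),
and `∫₀ᵀ ⟪f t, u t − u* t⟫ dt ≤ 0` for every admissible `u`, then for a.e.
`t ∈ (0,T)` one has `⟪f t, u* t⟫ = max{⟪f t, v⟫ : ‖v‖ ≤ M} = M‖f t‖`. -/
theorem ae_pointwise_max_of_integral_variational_inequality
    {H : Type*} [NormedAddCommGroup H] [InnerProductSpace ℝ H]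
    [CompleteSpace H] [TopologicalSpace.SeparableSpace H]
    (T M : ℝ) (hT : 0 < T) (hM : 0 < M)
    (f ustar : ℝ → H)
    (hf_int : IntegrableOn f (Set.Ioo 0 T))
    (hustar_meas : StronglyMeasurable ustar)
    (hustar_bdd : ∀ᵐ t ∂(volume.restrict (Set.Ioo (0 : ℝ) T)), ‖ustar t‖ ≤ M)
    (h : ∀ u : ℝ → H, StronglyMeasurable u →
      (∀ᵐ t ∂(volume.restrict (Set.Ioo (0 : ℝ) T)), ‖u t‖ ≤ M) →
      ∫ t in Set.Ioo (0 : ℝ) T, ⟪f t, u t - ustar t⟫ ≤ 0) :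
    ∀ᵐ t ∂(volume.restrict (Set.Ioo (0 : ℝ) T)),
      (∀ v : H, ‖v‖ ≤ M → ⟪f t, v⟫ ≤ ⟪f t, ustar t⟫) ∧
      ⟪f t, ustar t⟫ = M * ‖f t‖ := by
  set μ := volume.restrict (Set.Ioo (0 : ℝ) T) with hμ
  set g : ℝ → H := hf_int.1.mk f with hg_def
  have hg_meas : StronglyMeasurable g := hf_int.1.stronglyMeasurable_mk
  have hfg : f =ᵐ[μ] g := hf_int.1.ae_eq_mk
  set u : ℝ → H := fun t => (M / ‖g t‖) • g t with hu_def
  have hu_meas : StronglyMeasurable u := by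
    exact ((hg_meas.norm.measurable.const_div M).stronglyMeasurable).smul hg_meas
  have hu_bdd : ∀ t, ‖u t‖ ≤ M := by
    intro t
    rcases eq_or_ne (g t) 0 with h0 | h0
    · simp [hu_def, h0, hM.le]
    · have hn : ‖g t‖ ≠ 0 := norm_ne_zero_iff.mpr h0
      have : ‖u t‖ = (M / ‖g t‖) * ‖g t‖ := by
        rw [hu_def]
        rw [norm_smul, Real.norm_eq_abs, abs_of_nonneg (div_nonneg hM.le (norm_nonneg _))]
      rw [this, div_mul_cancel₀ _ hn]
  have key := h u hu_meas (Filter.Eventually.of_forall hu_bdd)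
  -- a.e. ⟪f t, u t⟫ = M * ‖f t‖
  have hinner_u : ∀ᵐ t ∂μ, ⟪f t, u t⟫ = M * ‖f t‖ := by
    filter_upwards [hfg] with t hfgt
    rcases eq_or_ne (f t) 0 with h0 | h0
    · simp [hu_def, h0, ← hfgt]
    · have hn : ‖f t‖ ≠ 0 := norm_ne_zero_iff.mpr h0
      rw [hu_def]
      simp only [← hfgt, real_inner_smul_right, real_inner_self_eq_norm_sq]
      field_simp
  set φ : ℝ → ℝ := fun t => M * ‖f t‖ - ⟪f t, ustar t⟫ with hφ_def
  have hφ_nonneg : ∀ᵐ t ∂μ, 0 ≤ φ t := by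
    filter_upwards [hustar_bdd] with t ht
    have h1 : ⟪f t, ustar t⟫ ≤ ‖f t‖ * ‖ustar t‖ := real_inner_le_norm _ _
    have h2 : ‖f t‖ * ‖ustar t‖ ≤ ‖f t‖ * M :=
      mul_le_mul_of_nonneg_left ht (norm_nonneg _)
    simp only [hφ_def, sub_nonneg]
    linarith
  have hinner_int : Integrable (fun t => ⟪f t, ustar t⟫) μ := by
    have hmeas : AEStronglyMeasurable (fun t => ⟪f t, ustar t⟫) μ :=
      AEStronglyMeasurable.inner hf_int.1 hustar_meas.aestronglyMeasurable
    refine Integrable.mono' (hf_int.norm.const_mul M) hmeas ?_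
    filter_upwards [hustar_bdd] with t ht
    have h1 : |⟪f t, ustar t⟫| ≤ ‖f t‖ * ‖ustar t‖ := abs_real_inner_le_norm _ _
    have h2 : ‖f t‖ * ‖ustar t‖ ≤ ‖f t‖ * M :=
      mul_le_mul_of_nonneg_left ht (norm_nonneg _)
    calc ‖⟪f t, ustar t⟫‖ = |⟪f t, ustar t⟫| := rfl
      _ ≤ ‖f t‖ * M := le_trans h1 h2
      _ = M * ‖f t‖ := mul_comm _ _
  have hφ_int : Integrable φ μ := (hf_int.norm.const_mul M).sub hinner_int
  have hint_eq : ∫ t, ⟪f t, u t - ustar t⟫ ∂μ = ∫ t, φ t ∂μ := by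
    refine integral_congr_ae ?_
    filter_upwards [hinner_u] with t ht
    rw [inner_sub_right, ht]
  have hint_le : ∫ t, φ t ∂μ ≤ 0 := by rw [← hint_eq]; exact key
  have hint_ge : 0 ≤ ∫ t, φ t ∂μ := integral_nonneg_of_ae hφ_nonneg
  have hint_zero : ∫ t, φ t ∂μ = 0 := le_antisymm hint_le hint_ge
  have hφ_zero : φ =ᵐ[μ] 0 :=
    (integral_eq_zero_iff_of_nonneg_ae hφ_nonneg hφ_int).mp hint_zero
  filter_upwards [hφ_zero] with t ht
  have heq : ⟪f t, ustar t⟫ = M * ‖f t‖ := by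
    have : M * ‖f t‖ - ⟪f t, ustar t⟫ = 0 := ht
    linarith
  refine ⟨fun v hv => ?_, heq⟩
  have h1 : ⟪f t, v⟫ ≤ ‖f t‖ * ‖v‖ := real_inner_le_norm _ _
  have h2 : ‖f t‖ * ‖v‖ ≤ ‖f t‖ * M := mul_le_mul_of_nonneg_left hv (norm_nonneg _)
  rw [heq]; linarith
end

section
/- Bang-bang property from a nonvanishing multiplier: Let H be a separable real Hilbert space with inner product ⟨·,·⟩ and norm ‖·‖, let T > 0 and M > 0. Let f : (0,T) → H be Bochner integrable with f(t) ≠ 0 for almost every t ∈ (0,T), and let u* : (0,T) → H be admissible with bound M. Suppose that for every u : (0,T) → H admissible with bound M one has ∫₀ᵀ ⟨f(t), u(t) − u*(t)⟩ dt ≤ 0. Then u*(t) = M f(t)/‖f(t)‖ for almost every t ∈ (0,T); in particular ‖u*(t)‖ = M for almost every t ∈ (0,T). -/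
open MeasureTheory
open scoped RealInnerProductSpace

/-- Bang-bang property from a nonvanishing multiplier: in a separable real
Hilbert space `H`, if `f` is Bochner integrable on `(0,T)` with `f t ≠ 0` a.e.,
`u*` is admissible with bound `M`, and `∫₀ᵀ ⟪f t, u t − u* t⟫ dt ≤ 0` for every
admissible `u`, then `u* t = M f t / ‖f t‖` a.e.; in particular `‖u* t‖ = M`
a.e. -/
theorem bang_bang_of_nonvanishing_multiplier
    {H : Type*} [NormedAddCommGroup H] [InnerProductSpace ℝ H]
    [CompleteSpace H] [TopologicalSpace.SeparableSpace H]
    (T M : ℝ) (hT : 0 < T) (hM : 0 < M)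
    (f ustar : ℝ → H)
    (hf_int : IntegrableOn f (Set.Ioo 0 T))
    (hf_ne : ∀ᵐ t ∂(volume.restrict (Set.Ioo (0 : ℝ) T)), f t ≠ 0)
    (hustar_meas : StronglyMeasurable ustar)
    (hustar_bdd : ∀ᵐ t ∂(volume.restrict (Set.Ioo (0 : ℝ) T)), ‖ustar t‖ ≤ M)
    (h : ∀ u : ℝ → H, StronglyMeasurable u →
      (∀ᵐ t ∂(volume.restrict (Set.Ioo (0 : ℝ) T)), ‖u t‖ ≤ M) →
      ∫ t in Set.Ioo (0 : ℝ) T, ⟪f t, u t - ustar t⟫ ≤ 0) :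
    ∀ᵐ t ∂(volume.restrict (Set.Ioo (0 : ℝ) T)),
      ustar t = (M / ‖f t‖) • f t ∧ ‖ustar t‖ = M := by
  set μ := volume.restrict (Set.Ioo (0 : ℝ) T) with hμ
  -- a strongly measurable representative of f
  obtain ⟨g, hg_sm, hg_ae⟩ := hf_int.aestronglyMeasurable
  -- the candidate control
  set u : ℝ → H := fun t => (M / ‖g t‖) • g t with hu_def
  have hu_sm : StronglyMeasurable u := by
    have hc : StronglyMeasurable (fun t => M / ‖g t‖) :=
      (hg_sm.norm.measurable.const_div M).stronglyMeasurable
    exact hc.smul hg_sm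
  have hu_bdd : ∀ t, ‖u t‖ ≤ M := by
    intro t
    rw [hu_def]
    simp only [norm_smul, Real.norm_eq_abs]
    rcases eq_or_ne (g t) 0 with h0 | h0
    · simp [h0, hM.le]
    · have hgn : ‖g t‖ ≠ 0 := norm_ne_zero_iff.mpr h0
      rw [abs_of_nonneg (div_nonneg hM.le (norm_nonneg _))]
      rw [div_mul_cancel₀ _ hgn]
  have key := h u hu_sm (Filter.Eventually.of_forall hu_bdd)
  -- the integrand
  set φ : ℝ → ℝ := fun t => ⟪f t, u t - ustar t⟫ with hφ_def
  have hφ_nonneg : ∀ᵐ t ∂μ, 0 ≤ φ t := by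
    filter_upwards [hf_ne, hustar_bdd, hg_ae] with t ht0 htb htg
    have hgn : ‖f t‖ ≠ 0 := norm_ne_zero_iff.mpr ht0
    have h1 : ⟪f t, u t⟫ = M * ‖f t‖ := by
      rw [hu_def]
      simp only [← htg, real_inner_smul_right, real_inner_self_eq_norm_mul_norm]
      field_simp
    have h2 : ⟪f t, ustar t⟫ ≤ M * ‖f t‖ := by
      calc ⟪f t, ustar t⟫ ≤ ‖f t‖ * ‖ustar t‖ := real_inner_le_norm _ _
        _ ≤ ‖f t‖ * M := by
            exact mul_le_mul_of_nonneg_left htb (norm_nonneg _)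
        _ = M * ‖f t‖ := mul_comm _ _
    rw [hφ_def]
    simp only [inner_sub_right, h1]
    linarith
  have hφ_int : Integrable φ μ := by
    have hφ_meas : AEStronglyMeasurable φ μ := by
      exact (hf_int.aestronglyMeasurable.inner
        ((hu_sm.aestronglyMeasurable).sub hustar_meas.aestronglyMeasurable))
    refine Integrable.mono (hf_int.norm.const_mul (2 * M)) hφ_meas ?_
    filter_upwards [hustar_bdd] with t htb
    rw [Real.norm_eq_abs, hφ_def]
    calc |⟪f t, u t - ustar t⟫| ≤ ‖f t‖ * ‖u t - ustar t‖ := abs_real_inner_le_norm _ _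
      _ ≤ ‖f t‖ * (2 * M) := by
          refine mul_le_mul_of_nonneg_left ?_ (norm_nonneg _)
          calc ‖u t - ustar t‖ ≤ ‖u t‖ + ‖ustar t‖ := norm_sub_le _ _
            _ ≤ M + M := add_le_add (hu_bdd t) htb
            _ = 2 * M := by ring
      _ ≤ ‖2 * M * ‖f t‖‖ := by
          rw [Real.norm_eq_abs, mul_comm (2*M) ‖f t‖]
          exact le_abs_self _
  have hφ_zero : φ =ᵐ[μ] 0 := by
    have h0 : ∫ t, φ t ∂μ = 0 := le_antisymm key (integral_nonneg_of_ae hφ_nonneg)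
    exact (integral_eq_zero_iff_of_nonneg_ae hφ_nonneg hφ_int).mp h0
  filter_upwards [hf_ne, hustar_bdd, hg_ae, hφ_zero] with t ht0 htb htg htz
  have hgn : ‖f t‖ ≠ 0 := norm_ne_zero_iff.mpr ht0
  have hgp : 0 < ‖f t‖ := lt_of_le_of_ne (norm_nonneg _) (Ne.symm hgn)
  have h1 : ⟪f t, u t⟫ = M * ‖f t‖ := by
    rw [hu_def]
    simp only [← htg, real_inner_smul_right, real_inner_self_eq_norm_mul_norm]
    field_simp
  have heq : ⟪f t, ustar t⟫ = M * ‖f t‖ := by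
    have : φ t = 0 := htz
    rw [hφ_def] at this
    simp only [inner_sub_right] at this
    linarith [h1]
  have hnorm : ‖ustar t‖ = M := by
    have hle : M * ‖f t‖ ≤ ‖f t‖ * ‖ustar t‖ := by
      rw [← heq]; exact real_inner_le_norm _ _
    have : M ≤ ‖ustar t‖ := by
      rw [mul_comm] at hle
      exact le_of_mul_le_mul_left hle hgp
    linarith
  have hcs : ⟪f t, ustar t⟫ = ‖f t‖ * ‖ustar t‖ := by
    rw [heq, hnorm]; ring
  have := (inner_eq_norm_mul_iff_real).mp hcs
  -- this : ‖ustar t‖ • f t = ‖f t‖ • ustar t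
  rw [hnorm] at this
  constructor
  · have : ustar t = (‖f t‖)⁻¹ • (M • f t) := by
      rw [this, smul_smul, inv_mul_cancel₀ hgn, one_smul]
    rw [this, smul_smul, div_eq_inv_mul]
  · exact hnorm
end
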